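/- arXiv:2402.05077 — 4 statements merged into one kernel-verified Lean document; each statement's English description precedes it below -/
import Mathlib

section
/- Let c be a positive constant with c < 1/2200 and let D be an oriented graph on n vertices with minimum semi-degree at least (1/2 - c)n. Then for any two (not necessarily disjoint) vertex subsets S and U with |S|, |U| ≥ (1/2 - c)n, the number of arcs (s,u) with s ∈ S and u ∈ U is at least n²/41. -/
/-- Out-degree of a vertex in a digraph given by the relation `G`. -/
noncomputable def outDeg {V : Type*} (G : V → V → Prop) (v : V) : ℕ :=
  Nat.card {w : V // G v w}

/-- In-degree of a vertex in a digraph given by the relation `G`. -/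
noncomputable def inDeg {V : Type*} (G : V → V → Prop) (v : V) : ℕ :=
  Nat.card {w : V // G w v}

/-- Number of arcs of `G` from the set `A` to the set `B` (arcs with both endpoints in
`A ∩ B` are counted when the tail lies in `A` and the head in `B`). -/
noncomputable def arcs {V : Type*} (G : V → V → Prop) (A B : Set V) : ℕ :=
  Nat.card {p : V × V // p.1 ∈ A ∧ p.2 ∈ B ∧ G p.1 p.2}

open scoped Classical
open Finset

section aux
set_option linter.unusedSectionVars false
variable {V : Type*} [Fintype V]

noncomputable def edN (G : V → V → Prop) (A B : Finset V) : ℕ :=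
  ∑ x ∈ A, (B.filter (fun y => G x y)).card

lemma edN_eq_card (G : V → V → Prop) (A B : Finset V) :
    edN G A B = ((A ×ˢ B).filter (fun p => G p.1 p.2)).card := by
  classical
  rw [Finset.card_eq_sum_card_fiberwise (f := Prod.fst) (t := A)
    (fun p hp => (Finset.mem_product.1 (Finset.mem_filter.1 hp).1).1)]
  refine Finset.sum_congr rfl fun x hx => ?_
  have h : ((A ×ˢ B).filter (fun p => G p.1 p.2)).filter (fun p => p.1 = x)
      = (B.filter (fun y => G x y)).image (fun y => (x, y)) := by
    ext ⟨p1, p2⟩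
    simp only [Finset.mem_filter, Finset.mem_product, Finset.mem_image]
    constructor
    · rintro ⟨⟨⟨h1, h2⟩, h3⟩, h4⟩
      subst h4
      exact ⟨p2, ⟨h2, h3⟩, rfl⟩
    · rintro ⟨y, ⟨hy, hG⟩, h⟩
      cases h
      exact ⟨⟨⟨hx, hy⟩, hG⟩, rfl⟩
  rw [h, Finset.card_image_of_injective _ (fun a b hab => by simpa using hab)]

lemma outDeg_eq (G : V → V → Prop) (v : V) :
    outDeg G v = (Finset.univ.filter (fun w => G v w)).card := by
  rw [outDeg, Nat.card_eq_fintype_card]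
  convert Fintype.card_subtype _

lemma inDeg_eq (G : V → V → Prop) (v : V) :
    inDeg G v = (Finset.univ.filter (fun w => G w v)).card := by
  rw [inDeg, Nat.card_eq_fintype_card]
  convert Fintype.card_subtype _

lemma arcs_eq (G : V → V → Prop) (S U : Set V) :
    arcs G S U = edN G S.toFinset U.toFinset := by
  rw [arcs, Nat.card_eq_fintype_card, edN_eq_card]
  have h : (S.toFinset ×ˢ U.toFinset).filter (fun p => G p.1 p.2)
      = Finset.univ.filter (fun p : V × V => p.1 ∈ S ∧ p.2 ∈ U ∧ G p.1 p.2) := by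
    ext ⟨p1, p2⟩
    simp [Set.mem_toFinset, and_assoc]
  rw [h]
  exact (Fintype.card_subtype _).trans (by congr 1)

lemma edN_le (G : V → V → Prop) (A B : Finset V) : edN G A B ≤ A.card * B.card := by
  calc edN G A B ≤ ∑ _x ∈ A, B.card := Finset.sum_le_sum fun x _ => Finset.card_filter_le _ _
  _ = A.card * B.card := by rw [Finset.sum_const, smul_eq_mul]

lemma edN_mono_left (G : V → V → Prop) {A A' : Finset V} (h : A' ⊆ A) (B : Finset V) :
    edN G A' B ≤ edN G A B :=
  Finset.sum_le_sum_of_subset h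

lemma edN_mono_right (G : V → V → Prop) (A : Finset V) {B B' : Finset V} (h : B' ⊆ B) :
    edN G A B' ≤ edN G A B :=
  Finset.sum_le_sum fun x _ => Finset.card_le_card (Finset.filter_subset_filter _ h)

lemma edN_rev (G : V → V → Prop) (A B : Finset V) :
    edN G A B = edN (fun x y => G y x) B A := by
  rw [edN_eq_card, edN_eq_card]
  have h : ((B ×ˢ A).filter (fun p => G p.2 p.1))
      = ((A ×ˢ B).filter (fun p => G p.1 p.2)).image Prod.swap := by
    ext ⟨p1, p2⟩
    simp only [Finset.mem_filter, Finset.mem_product, Finset.mem_image, Prod.exists]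
    constructor
    · rintro ⟨⟨h1, h2⟩, h3⟩
      exact ⟨p2, p1, ⟨⟨h2, h1⟩, h3⟩, rfl⟩
    · rintro ⟨x, y, ⟨⟨hx, hy⟩, hG⟩, h⟩
      cases h
      exact ⟨⟨hy, hx⟩, hG⟩
  rw [h, Finset.card_image_of_injective _ Prod.swap_injective]

lemma edN_oriented (G : V → V → Prop) (horiented : ∀ u v, G u v → ¬ G v u) (A : Finset V) :
    2 * edN G A A ≤ A.card * A.card := by
  rw [edN_eq_card]
  set T := (A ×ˢ A).filter (fun p => G p.1 p.2) with hT
  have hd : Disjoint T (T.image Prod.swap) := by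
    rw [Finset.disjoint_left]
    rintro ⟨p1, p2⟩ hp hq
    simp only [hT, Finset.mem_filter, Finset.mem_product, Finset.mem_image, Prod.exists] at hp hq
    obtain ⟨x, y, ⟨_, hG⟩, h⟩ := hq
    cases h
    exact horiented _ _ hp.2 hG
  have hsub : T ∪ T.image Prod.swap ⊆ A ×ˢ A := by
    apply Finset.union_subset (Finset.filter_subset _ _)
    intro p hp
    simp only [Finset.mem_image] at hp
    obtain ⟨q, hq, h⟩ := hp
    cases h
    have := (Finset.mem_filter.1 hq).1
    simp only [Finset.mem_product] at this ⊢
    exact ⟨this.2, this.1⟩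
  calc 2 * T.card = T.card + (T.image Prod.swap).card := by
        rw [Finset.card_image_of_injective _ Prod.swap_injective]; ring
  _ = (T ∪ T.image Prod.swap).card := (Finset.card_union_of_disjoint hd).symm
  _ ≤ (A ×ˢ A).card := Finset.card_le_card hsub
  _ = A.card * A.card := Finset.card_product _ _

end aux

set_option maxHeartbeats 1000000 in
/-- in an oriented graph on `n` vertices with minimum semi-degree at least
`(1/2 - c)n`, where `0 < c < 1/2200`, any two (not necessarily disjoint) sets `S`, `U` of
size at least `(1/2 - c)n` are joined by at least `n²/41` arcs from `S` to `U`. -/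
theorem stmt4 {V : Type*} [Fintype V] (G : V → V → Prop)
    (horiented : ∀ u v, G u v → ¬ G v u)
    (c : ℝ) (hc0 : 0 < c) (hc : c < 1/2200) (n : ℕ) (hn : Fintype.card V = n)
    (hdeg : ∀ v : V, ((1:ℝ)/2 - c) * n ≤ (outDeg G v : ℝ) ∧
                     ((1:ℝ)/2 - c) * n ≤ (inDeg G v : ℝ)) :
    ∀ S U : Set V, ((1:ℝ)/2 - c) * n ≤ (S.ncard : ℝ) → ((1:ℝ)/2 - c) * n ≤ (U.ncard : ℝ) →
      (n : ℝ)^2 / 41 ≤ (arcs G S U : ℝ) := by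
  classical
  intro S U hS hU
  set Sf := S.toFinset with hSfdef
  set Uf := U.toFinset with hUfdef
  set Wf := Sf ∩ Uf with hWfdef
  have hWS : Wf ⊆ Sf := Finset.inter_subset_left
  have hWU : Wf ⊆ Uf := Finset.inter_subset_right
  have harcs : arcs G S U = edN G Sf Uf := arcs_eq G S U
  set E := edN G Sf Uf with hE
  set s := Sf.card with hs
  set u := Uf.card with hu
  set w := Wf.card with hwdef
  have hns : S.ncard = s := Set.ncard_eq_toFinset_card' S
  have hnu : U.ncard = u := Set.ncard_eq_toFinset_card' U
  rw [hns] at hS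
  rw [hnu] at hU
  have hsn : s ≤ n := hn ▸ Finset.card_le_univ _
  have hun : u ≤ n := hn ▸ Finset.card_le_univ _
  have hws : w ≤ s := Finset.card_le_card hWS
  have hwu : w ≤ u := Finset.card_le_card hWU
  have hn0 : (0:ℝ) ≤ (n:ℝ) := Nat.cast_nonneg n
  have hdout : ∀ v : V, ((1:ℝ)/2 - c) * n ≤ ((Finset.univ.filter (fun y => G v y)).card : ℝ) :=
    fun v => by have := (hdeg v).1; rwa [outDeg_eq] at this
  have hdin : ∀ v : V, ((1:ℝ)/2 - c) * n ≤ ((Finset.univ.filter (fun y => G y v)).card : ℝ) :=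
    fun v => by have := (hdeg v).2; rwa [inDeg_eq] at this
  rw [harcs]
  by_cases hwbig : (n : ℝ) ≤ 4 * (w : ℝ)
  · -- Case 1 : large intersection
    -- per-vertex inequality
    have key : ∀ v ∈ Wf,
        (Finset.univ.filter (fun y => G v y)).card + (Finset.univ.filter (fun y => G y v)).card
        ≤ (Uf.filter (fun y => G v y)).card + ((Sf.filter (fun y => G y v)).card
          + (Finset.univ \ Wf).card) := by
      intro v _
      have hdisj : Disjoint (Finset.univ.filter (fun y => G v y))
          (Finset.univ.filter (fun y => G y v)) := by
        rw [Finset.disjoint_left]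
        intro x hx hy
        simp only [Finset.mem_filter] at hx hy
        exact horiented _ _ hx.2 hy.2
      have hsub : (Finset.univ.filter (fun y => G v y)) ∪ (Finset.univ.filter (fun y => G y v))
          ⊆ (Uf.filter (fun y => G v y)) ∪ ((Sf.filter (fun y => G y v)) ∪ (Finset.univ \ Wf)) := by
        intro x hx
        by_cases hxW : x ∈ Wf
        · simp only [Finset.mem_union, Finset.mem_filter] at hx ⊢
          rcases hx with h | h
          · exact Or.inl ⟨hWU hxW, h.2⟩
          · exact Or.inr (Or.inl ⟨hWS hxW, h.2⟩)
        · simp only [Finset.mem_union, Finset.mem_sdiff]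
          exact Or.inr (Or.inr ⟨Finset.mem_univ x, hxW⟩)
      calc (Finset.univ.filter (fun y => G v y)).card + (Finset.univ.filter (fun y => G y v)).card
          = ((Finset.univ.filter (fun y => G v y)) ∪ (Finset.univ.filter (fun y => G y v))).card :=
            (Finset.card_union_of_disjoint hdisj).symm
        _ ≤ ((Uf.filter (fun y => G v y)) ∪ ((Sf.filter (fun y => G y v)) ∪ (Finset.univ \ Wf))).card :=
            Finset.card_le_card hsub
        _ ≤ _ := le_trans (Finset.card_union_le _ _)
            (by exact Nat.add_le_add_left (Finset.card_union_le _ _) _)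
    have hsumkey : ∑ v ∈ Wf, ((Finset.univ.filter (fun y => G v y)).card
          + (Finset.univ.filter (fun y => G y v)).card)
        ≤ 2 * E + w * (Finset.univ \ Wf).card := by
      calc ∑ v ∈ Wf, ((Finset.univ.filter (fun y => G v y)).card
              + (Finset.univ.filter (fun y => G y v)).card)
          ≤ ∑ v ∈ Wf, ((Uf.filter (fun y => G v y)).card + ((Sf.filter (fun y => G y v)).card
              + (Finset.univ \ Wf).card)) := Finset.sum_le_sum key
        _ = edN G Wf Uf + (edN (fun x y => G y x) Wf Sf + w * (Finset.univ \ Wf).card) := by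
            rw [Finset.sum_add_distrib, Finset.sum_add_distrib, Finset.sum_const, smul_eq_mul]
            rfl
        _ ≤ E + (E + w * (Finset.univ \ Wf).card) := by
            have h1 : edN G Wf Uf ≤ E := edN_mono_left G hWS Uf
            have h2 : edN (fun x y => G y x) Wf Sf ≤ E := by
              rw [← edN_rev G Sf Wf]
              exact edN_mono_right G Sf hWU
            omega
        _ = 2 * E + w * (Finset.univ \ Wf).card := by ring
    -- cast to ℝ
    have hcompl : ((Finset.univ \ Wf).card : ℝ) = (n : ℝ) - w := by
      rw [Finset.card_sdiff_of_subset (Finset.subset_univ _), Finset.card_univ, hn,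
        Nat.cast_sub (hn ▸ Finset.card_le_univ _)]
    have hlow : (w : ℝ) * (((1:ℝ)/2 - c) * n + ((1:ℝ)/2 - c) * n)
        ≤ ((∑ v ∈ Wf, ((Finset.univ.filter (fun y => G v y)).card
          + (Finset.univ.filter (fun y => G y v)).card) : ℕ) : ℝ) := by
      push_cast
      rw [← nsmul_eq_mul]
      exact Finset.card_nsmul_le_sum Wf _ _ (fun v _ => add_le_add (hdout v) (hdin v))
    have hupr : ((∑ v ∈ Wf, ((Finset.univ.filter (fun y => G v y)).card
          + (Finset.univ.filter (fun y => G y v)).card) : ℕ) : ℝ)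
        ≤ 2 * (E : ℝ) + (w : ℝ) * ((n:ℝ) - w) := by
      calc _ ≤ ((2 * E + w * (Finset.univ \ Wf).card : ℕ) : ℝ) := Nat.cast_le.2 hsumkey
        _ = 2 * (E : ℝ) + (w : ℝ) * ((n:ℝ) - w) := by push_cast [hcompl]; ring
    have hwn : (w : ℝ) ≤ (n : ℝ) := Nat.cast_le.2 (le_trans hws hsn)
    nlinarith [mul_nonneg (by linarith : (0:ℝ) ≤ 4 * (w:ℝ) - n)
        (by nlinarith : (0:ℝ) ≤ (w:ℝ) + (n:ℝ)/4 - 2*c*n), sq_nonneg ((n:ℝ)),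
        mul_nonneg (mul_nonneg hc0.le hn0) hn0]
  · -- Case 2 : small intersection
    push_neg at hwbig
    set A := Sf \ Uf with hAdef
    set B := Finset.univ \ (Sf ∪ Uf) with hBdef
    set a := A.card with hadef
    set b := B.card with hbdef
    have hacard : a = s - w := by
      have : A = Sf \ Wf := by
        ext x
        simp only [hAdef, hWfdef, Finset.mem_sdiff, Finset.mem_inter]
        tauto
      rw [hadef, this, Finset.card_sdiff_of_subset hWS]
    have haR : (a : ℝ) = (s : ℝ) - w := by
      rw [hacard, Nat.cast_sub hws]
    have hcup : (Sf ∪ Uf).card + w = s + u := Finset.card_union_add_card_inter Sf Uf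
    have hcupn : (Sf ∪ Uf).card ≤ n := hn ▸ Finset.card_le_univ _
    have hbR : (b : ℝ) = (n : ℝ) - s - u + w := by
      rw [hbdef, Finset.card_sdiff_of_subset (Finset.subset_univ _), Finset.card_univ, hn,
        Nat.cast_sub hcupn]
      have : ((Sf ∪ Uf).card : ℝ) = (s : ℝ) + u - w := by
        have h' : ((Sf ∪ Uf).card : ℝ) + w = (s : ℝ) + u := by exact_mod_cast hcup
        linarith
      rw [this]; ring
    -- per-vertex: out-neighbourhood split
    have key : ∀ x : V, (Finset.univ.filter (fun y => G x y)).card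
        ≤ (Uf.filter (fun y => G x y)).card + ((A.filter (fun y => G x y)).card
          + (B.filter (fun y => G x y)).card) := by
      intro x
      have hsub : Finset.univ.filter (fun y => G x y)
          ⊆ (Uf.filter (fun y => G x y)) ∪ ((A.filter (fun y => G x y)) ∪ (B.filter (fun y => G x y))) := by
        intro y hy
        simp only [Finset.mem_filter, Finset.mem_univ, true_and] at hy
        simp only [Finset.mem_union, Finset.mem_filter, hAdef, hBdef, Finset.mem_sdiff,
          Finset.mem_univ, true_and]
        tauto
      calc (Finset.univ.filter (fun y => G x y)).card
          ≤ ((Uf.filter (fun y => G x y)) ∪ ((A.filter (fun y => G x y))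
              ∪ (B.filter (fun y => G x y)))).card := Finset.card_le_card hsub
        _ ≤ _ := le_trans (Finset.card_union_le _ _)
            (Nat.add_le_add_left (Finset.card_union_le _ _) _)
    have hsumkey : ∑ x ∈ Sf, (Finset.univ.filter (fun y => G x y)).card
        ≤ E + (edN G Sf A + edN G Sf B) := by
      calc ∑ x ∈ Sf, (Finset.univ.filter (fun y => G x y)).card
          ≤ ∑ x ∈ Sf, ((Uf.filter (fun y => G x y)).card + ((A.filter (fun y => G x y)).card
              + (B.filter (fun y => G x y)).card)) := Finset.sum_le_sum fun x _ => key x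
        _ = E + (edN G Sf A + edN G Sf B) := by
            rw [Finset.sum_add_distrib, Finset.sum_add_distrib]
            rfl
    have hSfsplit : Sf = Wf ∪ A := by
      ext x
      simp only [hWfdef, hAdef, Finset.mem_union, Finset.mem_inter, Finset.mem_sdiff]
      tauto
    have hWAdisj : Disjoint Wf A := by
      rw [Finset.disjoint_left]
      intro x hx hy
      simp only [hWfdef, Finset.mem_inter] at hx
      simp only [hAdef, Finset.mem_sdiff] at hy
      exact hy.2 hx.2
    have hedSfA : edN G Sf A = edN G Wf A + edN G A A := by
      rw [edN, edN, edN, hSfsplit, Finset.sum_union hWAdisj]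
    have hbound : 2 * (∑ x ∈ Sf, (Finset.univ.filter (fun y => G x y)).card)
        ≤ 2 * E + (2 * (w * a) + (a * a + 2 * (s * b))) := by
      have h1 : edN G Wf A ≤ w * a := edN_le G Wf A
      have h2 : 2 * edN G A A ≤ a * a := edN_oriented G horiented A
      have h3 : edN G Sf B ≤ s * b := edN_le G Sf B
      calc 2 * (∑ x ∈ Sf, (Finset.univ.filter (fun y => G x y)).card)
          ≤ 2 * (E + (edN G Sf A + edN G Sf B)) := Nat.mul_le_mul_left 2 hsumkey
        _ = 2 * E + ((2 * edN G Wf A + 2 * edN G A A) + 2 * edN G Sf B) := by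
            rw [hedSfA]; ring
        _ ≤ 2 * E + ((2 * (w * a) + (a * a)) + 2 * (s * b)) :=
            Nat.add_le_add_left (Nat.add_le_add
              (Nat.add_le_add (Nat.mul_le_mul_left 2 h1) h2) (Nat.mul_le_mul_left 2 h3)) _
        _ = 2 * E + (2 * (w * a) + (a * a + 2 * (s * b))) := by ring
    -- cast to ℝ
    have hlow : (s : ℝ) * (((1:ℝ)/2 - c) * n)
        ≤ ((∑ x ∈ Sf, (Finset.univ.filter (fun y => G x y)).card : ℕ) : ℝ) := by
      push_cast
      rw [← nsmul_eq_mul]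
      exact Finset.card_nsmul_le_sum Sf _ _ (fun v _ => hdout v)
    have hupr : ((2 * (∑ x ∈ Sf, (Finset.univ.filter (fun y => G x y)).card) : ℕ) : ℝ)
        ≤ 2 * (E : ℝ) + (2 * ((w:ℝ) * a) + ((a:ℝ) * a + 2 * ((s:ℝ) * b))) := by
      calc _ ≤ ((2 * E + (2 * (w * a) + (a * a + 2 * (s * b))) : ℕ) : ℝ) := Nat.cast_le.2 hbound
        _ = _ := by push_cast; ring
    have hsR : ((1:ℝ)/2 - c) * n ≤ (s : ℝ) := hS
    have huR : ((1:ℝ)/2 - c) * n ≤ (u : ℝ) := hU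
    have hsnR : (s : ℝ) ≤ n := Nat.cast_le.2 hsn
    have hunR : (u : ℝ) ≤ n := Nat.cast_le.2 hun
    have hwsR : (w : ℝ) ≤ s := Nat.cast_le.2 hws
    have hw0 : (0:ℝ) ≤ (w : ℝ) := Nat.cast_nonneg w
    have hs0 : (0:ℝ) ≤ (s : ℝ) := Nat.cast_nonneg s
    have key1 : ((1:ℝ)/4 - c) * n ≤ (s : ℝ) - w := by linarith
    have key1' : (0:ℝ) ≤ ((1:ℝ)/4 - c) * n := mul_nonneg (by linarith) hn0
    have key2 : (0:ℝ) ≤ (s : ℝ) * ((u : ℝ) - ((1:ℝ)/2 - c) * n) := mul_nonneg hs0 (by linarith)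
    have hcast2 : ((2 * (∑ x ∈ Sf, (Finset.univ.filter (fun y => G x y)).card) : ℕ) : ℝ)
        = 2 * ((∑ x ∈ Sf, (Finset.univ.filter (fun y => G x y)).card : ℕ) : ℝ) := by push_cast; ring
    rw [hcast2] at hupr
    nlinarith [mul_nonneg (sub_nonneg.2 key1) key1', sq_nonneg ((s:ℝ) - w - ((1:ℝ)/4 - c)*n),
      mul_nonneg (mul_nonneg hc0.le (sub_nonneg.2 hsnR)) hn0, sq_nonneg ((n:ℝ)),
      mul_nonneg hc0.le (mul_nonneg hn0 hn0), haR, hbR]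
end

section
/- Let D be an oriented graph on n vertices with minimum semi-degree at least (1/2 - c)n, let ε > 0 with 2cn ≤ εn, and for a set X define iteratively X^{0+} = X and X^{i+} = {x ∈ X^{(i-1)+} : d^-(x, X^{(i-1)+}) ≥ εn}. Then for every i ≥ 1, |X^{i+}| ≥ |X|/2^i - 2εn. -/
/-- The iterated sets `X^{i+}`: `X^{0+} = X` and
`X^{i+} = {x ∈ X^{(i-1)+} : d⁻(x, X^{(i-1)+}) ≥ εn}`. -/
noncomputable def iterPlus {V : Type*} (G : V → V → Prop) (ε : ℝ) (n : ℕ) (X : Set V) :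
    ℕ → Set V
  | 0 => X
  | i + 1 =>
      {x ∈ iterPlus G ε n X i |
        ε * n ≤ (Nat.card {w : V // w ∈ iterPlus G ε n X i ∧ G w x} : ℝ)}


/-! Write `y = |X^{i+}|`, `z = |X^{(i+1)+}|` and `e = εn`. In- and out-neighbourhoods are
disjoint, so every vertex has at least `y - 2cn ≥ y - e` in- and out-neighbours in `X^{i+}` in
total, and twice the number of arcs inside `X^{i+}` is at least `y (y - e)`. From above, each
removed vertex receives fewer than `e` of these arcs, each remaining vertex at most `y - z` from
removed ones, and `X^{(i+1)+}` spans at most `z² / 2` of them, so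
`y (y - e) ≤ z (2y - z) + 2 (y - z) e`. This quadratic inequality gives `z ≥ y/2 - 2e`, and
`z ≥ y/2` once `y ≥ 8e`: the sets halve exactly while they are large, and after the first
lossy step `|X| / 2^i` is already below `4e`. -/

open Finset

section Digraph

open scoped Classical

variable {V : Type*} (G : V → V → Prop)

/-- `d⁻(x, S)`; the out-degree `d⁺(x, S)` is `inDegIn (flip G) S x`. -/
noncomputable def inDegIn (S : Finset V) (x : V) : ℕ := #{w ∈ S | G w x}

noncomputable def arcCount (S : Finset V) : ℕ := ∑ x ∈ S, inDegIn G S x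

variable {G}

lemma inDegIn_sdiff_add {S T : Finset V} (hTS : T ⊆ S) (x : V) :
    inDegIn G (S \ T) x + inDegIn G T x = inDegIn G S x := by
  rw [inDegIn, inDegIn, inDegIn, ← card_union_of_disjoint
    (disjoint_filter_filter sdiff_disjoint), ← filter_union, sdiff_union_of_subset hTS]

lemma arcCount_flip (S : Finset V) : arcCount (flip G) S = arcCount G S := by
  simp only [arcCount, inDegIn, card_filter]
  exact sum_comm

lemma inDegIn_add_inDegIn_flip_le_card (hor : ∀ u v, G u v → ¬ G v u) (S : Finset V) (x : V) :
    inDegIn G S x + inDegIn (flip G) S x ≤ #S := by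
  rw [inDegIn, inDegIn, ← card_union_of_disjoint]
  · exact card_le_card (union_subset (filter_subset _ _) (filter_subset _ _))
  · exact disjoint_filter.2 fun w _ hin hout => hor x w hout hin

lemma two_mul_arcCount (S : Finset V) :
    2 * arcCount G S = ∑ x ∈ S, (inDegIn G S x + inDegIn (flip G) S x) := by
  rw [sum_add_distrib, ← arcCount, ← arcCount, arcCount_flip, two_mul]

lemma two_mul_arcCount_le_sq (hor : ∀ u v, G u v → ¬ G v u) (S : Finset V) :
    2 * arcCount G S ≤ #S ^ 2 :=
  calc 2 * arcCount G S = ∑ x ∈ S, (inDegIn G S x + inDegIn (flip G) S x) := two_mul_arcCount S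
    _ ≤ ∑ _x ∈ S, #S := sum_le_sum fun x _ => inDegIn_add_inDegIn_flip_le_card hor S x
    _ = #S ^ 2 := by rw [sum_const, smul_eq_mul, sq]

/-- An arc inside `S` either has its head in `S \ T`, or lies inside `T`, or goes from `S \ T`
into `T`. -/
lemma arcCount_le_of_subset {S T : Finset V} (hTS : T ⊆ S) :
    arcCount G S ≤ arcCount G T + #T * #(S \ T) + ∑ x ∈ S \ T, inDegIn G S x := by
  have hT : ∑ x ∈ T, inDegIn G S x ≤ arcCount G T + #T * #(S \ T) :=
    calc ∑ x ∈ T, inDegIn G S x = ∑ x ∈ T, (inDegIn G T x + inDegIn G (S \ T) x) := by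
          refine sum_congr rfl fun x _ => ?_
          rw [← inDegIn_sdiff_add hTS, add_comm]
      _ ≤ ∑ x ∈ T, (inDegIn G T x + #(S \ T)) :=
          sum_le_sum fun x _ => Nat.add_le_add_left (card_filter_le _ _) _
      _ = arcCount G T + #T * #(S \ T) := by rw [sum_add_distrib, sum_const, smul_eq_mul]; rfl
  rw [arcCount, ← sum_sdiff hTS]
  omega

variable [Fintype V]

lemma inDeg_eq_inDegIn_univ (x : V) : inDeg G x = inDegIn G univ x := by
  rw [inDeg, Nat.card_eq_fintype_card, Fintype.card_subtype, inDegIn]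

/-- The in- and out-neighbourhoods of `x` are disjoint, so together they miss at most
`|V| - |S|` vertices outside `S`. -/
lemma inDeg_add_outDeg_add_card_le (hor : ∀ u v, G u v → ¬ G v u) (S : Finset V) (x : V) :
    inDeg G x + outDeg G x + #S ≤ inDegIn G S x + inDegIn (flip G) S x + Fintype.card V := by
  have hout : outDeg G x = inDegIn (flip G) univ x := inDeg_eq_inDegIn_univ (G := flip G) x
  have hcompl := inDegIn_add_inDegIn_flip_le_card hor (univ \ S) x
  rw [card_univ_sdiff] at hcompl
  have hS := card_le_univ S
  rw [inDeg_eq_inDegIn_univ, hout, ← inDegIn_sdiff_add (subset_univ S),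
    ← inDegIn_sdiff_add (G := flip G) (subset_univ S)]
  omega

lemma card_mul_le_two_mul_arcCount (hor : ∀ u v, G u v → ¬ G v u) {δ : ℝ}
    (hδ : ∀ x, δ ≤ outDeg G x ∧ δ ≤ inDeg G x) (S : Finset V) :
    (#S : ℝ) * (#S + 2 * δ - Fintype.card V) ≤ 2 * arcCount G S := by
  have hx (x : V) :
      (#S : ℝ) + 2 * δ - Fintype.card V ≤ inDegIn G S x + inDegIn (flip G) S x := by
    have hcount : ((inDeg G x + outDeg G x + #S : ℕ) : ℝ) ≤
        (inDegIn G S x + inDegIn (flip G) S x + Fintype.card V : ℕ) := by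
      exact_mod_cast inDeg_add_outDeg_add_card_le hor S x
    push_cast at hcount
    linarith [hδ x]
  calc (#S : ℝ) * (#S + 2 * δ - Fintype.card V)
      = ∑ _x ∈ S, ((#S : ℝ) + 2 * δ - Fintype.card V) := by rw [sum_const, nsmul_eq_mul]
    _ ≤ ∑ x ∈ S, ((inDegIn G S x : ℝ) + inDegIn (flip G) S x) := sum_le_sum fun x _ => hx x
    _ = 2 * arcCount G S := by
        rw [← Nat.cast_ofNat, ← Nat.cast_mul, two_mul_arcCount]
        push_cast
        rfl

lemma card_mul_le_of_subset (hor : ∀ u v, G u v → ¬ G v u) {δ e : ℝ}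
    (hδ : ∀ x, δ ≤ outDeg G x ∧ δ ≤ inDeg G x) {S T : Finset V} (hTS : T ⊆ S)
    (hsmall : ∀ x ∈ S \ T, inDegIn G S x ≤ e) :
    (#S : ℝ) * (#S + 2 * δ - Fintype.card V) ≤ #T * (2 * #S - #T) + 2 * (#S - #T) * e := by
  have hsum : ∑ x ∈ S \ T, (inDegIn G S x : ℝ) ≤ #(S \ T) * e := by
    rw [← nsmul_eq_mul, ← sum_const]
    exact sum_le_sum hsmall
  have hST : (#(S \ T) : ℝ) = #S - #T := by
    rw [card_sdiff_of_subset hTS, Nat.cast_sub (card_le_card hTS)]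
  have hupper : (arcCount G S : ℝ) ≤
      arcCount G T + #T * #(S \ T) + ∑ x ∈ S \ T, (inDegIn G S x : ℝ) := by
    exact_mod_cast arcCount_le_of_subset hTS
  have hT : (2 * arcCount G T : ℝ) ≤ #T ^ 2 := by exact_mod_cast two_mul_arcCount_le_sq hor T
  have hS := card_mul_le_two_mul_arcCount hor hδ S
  rw [hST] at hupper hsum
  nlinarith

end Digraph

/- The hypothesis `h` is equivalent to `(y - e - z) ^ 2 ≤ e ^ 2 + y * e`, which bounds `z` from
below by `y - e - √(e ^ 2 + y * e)`. -/
lemma half_sub_two_mul_le_of_le {y z e : ℝ} (hz : 0 ≤ z) (he : 0 ≤ e)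
    (h : y * (y - e) ≤ z * (2 * y - z) + 2 * (y - z) * e) : y / 2 - 2 * e ≤ z := by
  by_contra! hlt
  have hgap : y / 2 + e < y - e - z := by linarith
  nlinarith [mul_lt_mul'' hgap hgap (by linarith) (by linarith)]

lemma half_le_of_le {y z e : ℝ} (hy : 0 ≤ y) (hye : 8 * e ≤ y)
    (h : y * (y - e) ≤ z * (2 * y - z) + 2 * (y - z) * e) : y / 2 ≤ z := by
  by_contra! hlt
  have hgap : y / 2 - e < y - e - z := by linarith
  nlinarith [mul_lt_mul'' hgap hgap (by linarith) (by linarith)]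

/- While `a i ≥ 8e` the sequence halves exactly; once it drops below `8e`, one lossy step brings
`a 0 / 2 ^ i` below `4e`, and after that the claimed bound is negative. -/
lemma div_two_pow_sub_le_of_halving {a : ℕ → ℝ} {e : ℝ} (ha : ∀ i, 0 ≤ a i) (he : 0 ≤ e)
    (hstep : ∀ i, a i / 2 - 2 * e ≤ a (i + 1))
    (hlarge : ∀ i, 8 * e ≤ a i → a i / 2 ≤ a (i + 1)) (i : ℕ) : a 0 / 2 ^ i - 2 * e ≤ a i := by
  suffices ∀ i, a 0 / 2 ^ i - 2 * e ≤ a i ∧ (a 0 / 2 ^ i ≤ a i ∨ a 0 / 2 ^ i ≤ 4 * e) from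
    (this i).1
  intro i
  induction i with
  | zero => simp only [pow_zero, div_one, le_refl, true_or, and_true]; linarith
  | succ i ih =>
    have ht : 0 ≤ a 0 / 2 ^ i := div_nonneg (ha 0) (by positivity)
    have hnext := ha (i + 1)
    rw [pow_succ, ← div_div]
    obtain ⟨hlow, hbig | hsmall⟩ := ih
    · rcases le_or_gt (8 * e) (a i) with hy | hy
      · have := hlarge i hy
        exact ⟨by linarith, Or.inl (by linarith)⟩
      · have := hstep i
        exact ⟨by linarith, Or.inr (by linarith)⟩
    · exact ⟨by linarith, Or.inr (by linarith)⟩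

section IterPlus

open scoped Classical

variable {V : Type*} [Fintype V] {G : V → V → Prop}

lemma natCard_mem_and_eq_inDegIn (Y : Set V) (x : V) :
    Nat.card {w : V // w ∈ Y ∧ G w x} = inDegIn G Y.toFinset x := by
  rw [Nat.card_eq_fintype_card, Fintype.card_subtype, inDegIn]
  congr 1
  ext w
  simp

lemma ncard_iterPlus_succ_bound (hor : ∀ u v, G u v → ¬ G v u) {δ ε : ℝ} {n : ℕ}
    (hδ : ∀ x, δ ≤ outDeg G x ∧ δ ≤ inDeg G x) (hδε : Fintype.card V - 2 * δ ≤ ε * n)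
    (X : Set V) (i : ℕ) :
    let y : ℝ := (iterPlus G ε n X i).ncard
    let z : ℝ := (iterPlus G ε n X (i + 1)).ncard
    y * (y - ε * n) ≤ z * (2 * y - z) + 2 * (y - z) * (ε * n) := by
  intro y z
  have hsub : (iterPlus G ε n X (i + 1)).toFinset ⊆ (iterPlus G ε n X i).toFinset :=
    Set.toFinset_subset_toFinset.2 fun x hx => hx.1
  have hsmall : ∀ x ∈ (iterPlus G ε n X i).toFinset \ (iterPlus G ε n X (i + 1)).toFinset,
      (inDegIn G (iterPlus G ε n X i).toFinset x : ℝ) ≤ ε * n := by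
    intro x hx
    simp only [mem_sdiff, Set.mem_toFinset] at hx
    rw [← natCard_mem_and_eq_inDegIn]
    exact (not_le.1 fun h => hx.2 ⟨hx.1, h⟩).le
  have h := card_mul_le_of_subset hor hδ hsub hsmall
  rw [← Set.ncard_eq_toFinset_card', ← Set.ncard_eq_toFinset_card'] at h
  have hy : 0 ≤ y := Nat.cast_nonneg _
  nlinarith

end IterPlus

theorem stmt6_general {V : Type*} [Fintype V] (G : V → V → Prop)
    (horiented : ∀ u v, G u v → ¬ G v u)
    (c ε : ℝ) (hε : 0 < ε) (n : ℕ) (hn : Fintype.card V = n)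
    (hcε : 2*c*n ≤ ε*n)
    (hdeg : ∀ v : V, ((1:ℝ)/2 - c) * n ≤ (outDeg G v : ℝ) ∧
                     ((1:ℝ)/2 - c) * n ≤ (inDeg G v : ℝ))
    (X : Set V) :
    ∀ i : ℕ, 1 ≤ i →
      (X.ncard : ℝ)/2^i - 2*ε*n ≤ ((iterPlus G ε n X i).ncard : ℝ) := by
  intro i _
  have he : 0 ≤ ε * n := by positivity
  have hδε : (Fintype.card V : ℝ) - 2 * ((1 / 2 - c) * n) ≤ ε * n := by rw [hn]; linarith
  have hpeel := ncard_iterPlus_succ_bound horiented hdeg hδε X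
  have key := div_two_pow_sub_le_of_halving (fun i => Nat.cast_nonneg _) he
    (fun i => half_sub_two_mul_le_of_le (Nat.cast_nonneg _) he (hpeel i))
    (fun i hi => half_le_of_le (Nat.cast_nonneg _) hi (hpeel i)) i
  simpa only [iterPlus, mul_assoc] using key

/-- in an oriented graph on `n` vertices with minimum semi-degree at least
`(1/2 - c)n`, with `2cn ≤ εn`, for every `i ≥ 1` we have `|X^{i+}| ≥ |X|/2^i - 2εn`. -/
theorem stmt6 {V : Type*} [Fintype V] (G : V → V → Prop)
    (horiented : ∀ u v, G u v → ¬ G v u)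
    (c ε : ℝ) (hc : 0 < c) (hε : 0 < ε) (n : ℕ) (hn : Fintype.card V = n)
    (hcε : 2*c*n ≤ ε*n)
    (hdeg : ∀ v : V, ((1:ℝ)/2 - c) * n ≤ (outDeg G v : ℝ) ∧
                     ((1:ℝ)/2 - c) * n ≤ (inDeg G v : ℝ))
    (X : Set V) :
    ∀ i : ℕ, 1 ≤ i →
      (X.ncard : ℝ)/2^i - 2*ε*n ≤ ((iterPlus G ε n X i).ncard : ℝ) :=
  stmt6_general G horiented c ε hε n hn hcε hdeg X
end

section
/- Let H be a k-uniform hypergraph on n vertices in which every vertex has degree at least (1/(6k^{3/2}))·C(n-1, k-1). Suppose 0 < α < 1/(108k⁴·k!) and n is sufficiently large. Then among any 6k^{3/2} + 1 vertices of H, there exist two vertices u, v with |N(u) ∩ N(v)| ≥ αn^{k-1}. -/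
set_option maxHeartbeats 1000000

open Finset
lemma bonferroni {V X : Type*} [DecidableEq V] [DecidableEq X] (A : V → Finset X) (s : Finset V) :
    2 * (∑ v ∈ s, ((A v).card : ℝ)) ≤
      2 * ((s.biUnion A).card : ℝ) + ∑ p ∈ s.offDiag, ((A p.1 ∩ A p.2).card : ℝ) := by
  induction s using Finset.induction_on with
  | empty => simp
  | insert _ _ ha ih =>
    rename_i a s
    rw [Finset.sum_insert ha, Finset.biUnion_insert, Finset.offDiag_insert ha]
    have hdisj1 : Disjoint (s.offDiag ∪ {a} ×ˢ s) (s ×ˢ {a}) := by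
      rw [Finset.disjoint_union_left]
      constructor
      · rw [Finset.disjoint_left]
        rintro ⟨x, y⟩ hx hy
        simp only [Finset.mem_offDiag, Finset.mem_product, Finset.mem_singleton] at hx hy
        exact ha (hy.2 ▸ hx.2.1)
      · rw [Finset.disjoint_left]
        rintro ⟨x, y⟩ hx hy
        simp only [Finset.mem_product, Finset.mem_singleton] at hx hy
        exact ha (hx.1 ▸ hy.1)
    have hdisj2 : Disjoint s.offDiag ({a} ×ˢ s) := by
      rw [Finset.disjoint_left]
      rintro ⟨x, y⟩ hx hy
      simp only [Finset.mem_offDiag, Finset.mem_product, Finset.mem_singleton] at hx hy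
      exact ha (hy.1 ▸ hx.1)
    rw [Finset.sum_union hdisj1, Finset.sum_union hdisj2, Finset.sum_product, Finset.sum_product,
      Finset.sum_singleton]
    simp only [Finset.sum_singleton]
    have hcap : ((A a ∩ s.biUnion A).card : ℝ) ≤ ∑ v ∈ s, ((A a ∩ A v).card : ℝ) := by
      have h1 : A a ∩ s.biUnion A ⊆ s.biUnion (fun v => A a ∩ A v) := by
        intro x hx
        simp only [Finset.mem_inter, Finset.mem_biUnion] at hx ⊢
        obtain ⟨h1, v, hv, h2⟩ := hx
        exact ⟨v, hv, h1, h2⟩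
      calc ((A a ∩ s.biUnion A).card : ℝ) ≤ ((s.biUnion fun v => A a ∩ A v).card : ℝ) := by
            exact_mod_cast Finset.card_le_card h1
        _ ≤ ∑ v ∈ s, ((A a ∩ A v).card : ℝ) := by
            exact_mod_cast Finset.card_biUnion_le
    have hsymm : ∀ v ∈ s, ((A v ∩ A a).card : ℝ) = ((A a ∩ A v).card : ℝ) := by
      intro v _; rw [Finset.inter_comm]
    rw [Finset.sum_congr rfl hsymm]
    have hu : ((A a ∪ s.biUnion A).card : ℝ) + ((A a ∩ s.biUnion A).card : ℝ)
        = ((A a).card : ℝ) + ((s.biUnion A).card : ℝ) := by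
      exact_mod_cast congrArg (Nat.cast : ℕ → ℝ) (Finset.card_union_add_card_inter (A a) (s.biUnion A))
    linarith



lemma pow_sub_pow_le' (a b : ℝ) (h0 : 0 ≤ a) (hab : a ≤ b) (m : ℕ) :
    b ^ (m+1) - a ^ (m+1) ≤ ((m:ℝ) + 1) * (b - a) * b ^ m := by
  induction m with
  | zero => norm_num
  | succ m ih =>
    have hb0 : 0 ≤ b := le_trans h0 hab
    have hpow : a ^ (m+1) ≤ b ^ (m+1) := pow_le_pow_left₀ h0 hab (m+1)
    have h1 : (b ^ (m+1) - a ^ (m+1)) * b ≤ (((m:ℝ) + 1) * (b - a) * b ^ m) * b :=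
      mul_le_mul_of_nonneg_right ih hb0
    rw [show (((m:ℝ) + 1) * (b - a) * b ^ m) * b = ((m:ℝ) + 1) * (b - a) * b ^ (m+1) by
      rw [pow_succ]; ring] at h1
    have h2 : (b - a) * a ^ (m+1) ≤ (b - a) * b ^ (m+1) :=
      mul_le_mul_of_nonneg_left hpow (by linarith)
    rw [pow_succ b (m+1), pow_succ a (m+1)]
    push_cast
    linarith [h1, h2]

lemma key_arith (k : ℕ) (hk : 2 ≤ k) (α : ℝ) (hα0 : 0 < α)
    (hα : α < 1 / (108 * (k:ℝ)^4 * (Nat.factorial k))) :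
    ∃ n₀ : ℕ, 2*k+2 ≤ n₀ ∧ ∀ n : ℕ, n₀ ≤ n → ∀ m : ℕ,
      6*(k:ℝ)^((3:ℝ)/2) + 1 ≤ (m:ℝ) → (m:ℝ) ≤ 6*(k:ℝ)^((3:ℝ)/2) + 2 →
      2 * (n.choose (k-1) : ℝ) + (m:ℝ)*((m:ℝ)-1) * (α * (n:ℝ)^(k-1))
        < 2 * (m:ℝ) * (1/(6*(k:ℝ)^((3:ℝ)/2))) * (((n-1).choose (k-1)) : ℝ) := by
  have hk0 : (0:ℝ) < k := by exact_mod_cast (show 0 < k by omega)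
  obtain ⟨u, hu0, hu2, hu3⟩ : ∃ u : ℝ, 0 ≤ u ∧ u ^ 2 = (k:ℝ) ∧
      (k:ℝ) ^ ((3:ℝ)/2) = u ^ 3 := by
    refine ⟨(k:ℝ) ^ ((1:ℝ)/2), Real.rpow_nonneg hk0.le _, ?_, ?_⟩
    · rw [← Real.rpow_natCast ((k:ℝ) ^ ((1:ℝ)/2)) 2, ← Real.rpow_mul hk0.le]
      norm_num
    · rw [← Real.rpow_natCast ((k:ℝ) ^ ((1:ℝ)/2)) 3, ← Real.rpow_mul hk0.le]
      norm_num
  have hu2' : (2:ℝ) ≤ u ^ 2 := by rw [hu2]; exact_mod_cast hk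
  have hu141 : (1.41:ℝ) ≤ u := by nlinarith
  set t : ℝ := 6 * u ^ 3 with htdef
  have ht16 : (16:ℝ) ≤ t := by nlinarith
  have ht0 : (0:ℝ) < t := by linarith
  set F : ℝ := ((k-1).factorial : ℝ) with hFdef
  have hF0 : (0:ℝ) < F := by
    rw [hFdef]; exact_mod_cast Nat.factorial_pos _
  have hkF : ((Nat.factorial k : ℕ) : ℝ) = (k:ℝ) * F := by
    rw [hFdef]
    exact_mod_cast (Nat.mul_factorial_pred (by omega)).symm
  have htt : t * (t+1) * (t+2) ≤ 216 * (k:ℝ)^5 := by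
    have h5 : (k:ℝ)^5 = (u^2)^5 := by rw [hu2]
    rw [h5, htdef]
    nlinarith [pow_nonneg hu0 3, pow_nonneg hu0 6, pow_nonneg hu0 9, sq_nonneg u,
      mul_le_mul_of_nonneg_left hu141 (pow_nonneg hu0 9),
      mul_le_mul_of_nonneg_left hu141 (pow_nonneg hu0 6),
      mul_le_mul_of_nonneg_left hu141 (pow_nonneg hu0 3)]
  have hd0 : (0:ℝ) < 108 * (k:ℝ)^4 * (Nat.factorial k) := by positivity
  have hα1 : α * (108 * (k:ℝ)^4 * (Nat.factorial k)) < 1 := (lt_div_iff₀ hd0).mp hα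
  have hε : 0 < 2 - α * (t * (t+1) * (t+2)) * F := by
    have h1 : α * F * (t * (t+1) * (t+2)) ≤ α * F * (216 * (k:ℝ)^5) :=
      mul_le_mul_of_nonneg_left htt (by positivity)
    have h2 : α * F * (216 * (k:ℝ)^5) = 2 * (α * (108 * (k:ℝ)^4 * ((k:ℝ) * F))) := by ring
    rw [← hkF] at h2
    nlinarith [h1, h2, hα1]
  set ε : ℝ := 2 - α * (t * (t+1) * (t+2)) * F with hεdef
  refine ⟨⌈(2*t*F + 2*(k:ℝ)^2)/ε⌉₊ + 2*k + 2, by omega, ?_⟩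
  intro n hn m hm1 hm2
  rw [hu3] at hm1 hm2
  rw [hu3]
  rw [← htdef] at hm1 hm2 ⊢
  have hnk : 2*k + 2 ≤ n := by omega
  have hnR : ((⌈(2*t*F + 2*(k:ℝ)^2)/ε⌉₊ : ℝ) + 1) ≤ (n:ℝ) := by
    have : ⌈(2*t*F + 2*(k:ℝ)^2)/ε⌉₊ + 1 ≤ n := by omega
    exact_mod_cast this
  have hn' : 2*t*F + 2*(k:ℝ)^2 < ε * n := by
    have h1 : (2*t*F + 2*(k:ℝ)^2)/ε < (n:ℝ) := by
      have := Nat.le_ceil ((2*t*F + 2*(k:ℝ)^2)/ε)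
      linarith
    have := (div_lt_iff₀ hε).mp h1
    linarith
  set D : ℝ := (((n-1).choose (k-1)) : ℝ) with hDdef
  set C' : ℝ := (((n-1).choose (k-2)) : ℝ) with hCdef
  set P : ℝ := (n:ℝ)^(k-2) with hPdef
  have hn0R : (0:ℝ) < (n:ℝ) := by exact_mod_cast (show 0 < n by omega)
  have hP0 : (0:ℝ) < P := by rw [hPdef]; exact pow_pos hn0R _
  have hD0 : (0:ℝ) ≤ D := by rw [hDdef]; positivity
  have hkk : k - 1 = (k-2) + 1 := by omega
  have hnn : n - 1 + 1 = n := by omega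
  have f1 : (n.choose (k-1) : ℝ) = D + C' := by
    have : n.choose (k-1) = (n-1).choose (k-2) + (n-1).choose (k-1) := by
      conv_lhs => rw [← hnn, hkk]
      rw [Nat.choose_succ_succ, Nat.succ_eq_add_one, ← hkk]
    rw [hDdef, hCdef]
    push_cast [this]
    ring
  have f2 : C' ≤ P := by
    rw [hCdef, hPdef]
    calc (((n-1).choose (k-2)) : ℝ) ≤ (((n-1)^(k-2) : ℕ) : ℝ) := by
          exact_mod_cast Nat.choose_le_pow (n-1) (k-2)
    _ ≤ (((n)^(k-2) : ℕ) : ℝ) := by exact_mod_cast Nat.pow_le_pow_left (by omega) _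
    _ = (n:ℝ)^(k-2) := by push_cast; ring
  set Q : ℝ := ((n:ℝ) - (k:ℝ) + 1)^(k-1) with hQdef
  have hcast : ((n - (k-1) : ℕ) : ℝ) = (n:ℝ) - (k:ℝ) + 1 := by
    rw [Nat.cast_sub (by omega), Nat.cast_sub (by omega)]
    push_cast
    ring
  have f3 : Q ≤ D * F := by
    have h := Nat.pow_le_choose (α := ℝ) (k-1) (n-1)
    have hnn2 : n - 1 + 1 - (k-1) = n - (k-1) := by omega
    rw [hnn2] at h
    rw [div_le_iff₀ hF0] at h
    rw [hQdef, ← hcast]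
    exact h
  have f4 : (n:ℝ)^(k-1) - Q ≤ (k:ℝ)^2 * P := by
    have ha0 : (0:ℝ) ≤ (n:ℝ) - (k:ℝ) + 1 := by
      have : (k:ℝ) ≤ (n:ℝ) := by exact_mod_cast (show k ≤ n by omega)
      linarith
    have hab : (n:ℝ) - (k:ℝ) + 1 ≤ (n:ℝ) := by linarith
    have h := pow_sub_pow_le' ((n:ℝ) - (k:ℝ) + 1) (n:ℝ) ha0 hab (k-2)
    rw [← hkk] at h
    have hc2 : ((k-2:ℕ):ℝ) = (k:ℝ) - 2 := by
      rw [Nat.cast_sub (by omega)]; push_cast; ring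
    have h' : (n:ℝ)^(k-1) - ((n:ℝ)-(k:ℝ)+1)^(k-1) ≤ ((k:ℝ)-1)*((k:ℝ)-1)*(n:ℝ)^(k-2) := by
      calc (n:ℝ)^(k-1) - ((n:ℝ)-(k:ℝ)+1)^(k-1)
          ≤ (((k-2:ℕ):ℝ) + 1) * ((n:ℝ) - ((n:ℝ)-(k:ℝ)+1)) * (n:ℝ)^(k-2) := h
        _ = ((k:ℝ)-1)*((k:ℝ)-1)*(n:ℝ)^(k-2) := by rw [hc2]; ring
    have hx : 0 ≤ (2*(k:ℝ)-1) * (n:ℝ)^(k-2) :=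
      mul_nonneg (by linarith) (pow_nonneg hn0R.le _)
    rw [hQdef, hPdef]
    linarith [h', hx]
  have f5 : (n:ℝ)^(k-1) = (n:ℝ) * P := by
    rw [hPdef, hkk, pow_succ]; ring
  have hM1 : (1:ℝ) ≤ (m:ℝ) := by linarith
  have hMM : (m:ℝ) * ((m:ℝ)-1) ≤ (t+1)*(t+2) := by
    have p1 : (0:ℝ) ≤ (t+2-(m:ℝ)) * ((m:ℝ)-1) :=
      mul_nonneg (by linarith) (by linarith)
    have p2 : (0:ℝ) ≤ (t+2) * ((t+2)-(m:ℝ)) :=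
      mul_nonneg (by linarith) (by linarith)
    linarith [p1, p2]
  have stepA : (2*t*F + 2*(k:ℝ)^2) * P < (ε * n) * P := mul_lt_mul_of_pos_right hn' hP0
  have stepQ : 2*(n:ℝ)*P - 2*(k:ℝ)^2*P ≤ 2*D*F := by
    linarith [f3, f4, f5]
  have stepA2 : 2*t*P*F + α*(t*(t+1)*(t+2))*F*((n:ℝ)*P) < 2*D*F := by
    have hexp : (ε * n) * P = 2*(n:ℝ)*P - α*(t*(t+1)*(t+2))*F*((n:ℝ)*P) := by
      rw [hεdef]; ring
    rw [hexp] at stepA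
    linarith
  have h1 : 0 ≤ (P - C') * (2*t*F) := mul_nonneg (by linarith) (by positivity)
  have h2 : 0 ≤ ((t+1)*(t+2) - (m:ℝ)*((m:ℝ)-1)) * (α*(n:ℝ)*P*t*F) :=
    mul_nonneg (by linarith) (by positivity)
  have h3 : 0 ≤ ((m:ℝ) - (t+1)) * (2*D*F) :=
    mul_nonneg (by linarith) (by positivity)
  have goalF : ((2 * (n.choose (k-1) : ℝ) + (m:ℝ)*((m:ℝ)-1) * (α * (n:ℝ)^(k-1))) * t) * F
      < (2 * (m:ℝ) * D) * F := by
    rw [f1, f5]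
    linarith [stepA2, h1, h2, h3]
  have hfin : (2 * (n.choose (k-1) : ℝ) + (m:ℝ)*((m:ℝ)-1) * (α * (n:ℝ)^(k-1))) * t
      < 2 * (m:ℝ) * D := lt_of_mul_lt_mul_right goalF hF0.le
  rw [show 2 * (m:ℝ) * (1/t) * D = (2 * (m:ℝ) * D) / t by ring]
  rw [lt_div_iff₀ ht0]
  exact hfin



/-- if `H` is a `k`-uniform hypergraph on `n` vertices (`n` large) in which
every vertex has degree at least `(1/(6k^{3/2}))·C(n-1,k-1)`, and
`0 < α < 1/(108k⁴·k!)`, then among any `6k^{3/2} + 1` vertices there are two whose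
neighbourhoods (sets of `(k-1)`-sets completing them to an edge) share at least
`αn^{k-1}` members. -/
theorem stmt9 (k : ℕ) (hk : 2 ≤ k) (α : ℝ) (hα0 : 0 < α)
    (hα : α < 1 / (108 * (k:ℝ)^4 * (Nat.factorial k))) :
    ∃ n₀ : ℕ, ∀ n : ℕ, n₀ ≤ n → ∀ (V : Type) [Fintype V] [DecidableEq V],
      Fintype.card V = n →
      ∀ H : Finset V → Prop,
      (∀ e, H e → e.card = k) →
      (∀ v : V, (1 / (6 * (k:ℝ) ^ ((3:ℝ)/2))) * ((n-1).choose (k-1)) ≤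
        (Nat.card {S : Finset V // v ∉ S ∧ H (insert v S)} : ℝ)) →
      ∀ T : Finset V, 6 * (k:ℝ) ^ ((3:ℝ)/2) + 1 ≤ (T.card : ℝ) →
      ∃ u ∈ T, ∃ v ∈ T, u ≠ v ∧
        α * (n : ℝ)^(k-1) ≤
          (Nat.card {S : Finset V // u ∉ S ∧ v ∉ S ∧ H (insert u S) ∧ H (insert v S)} : ℝ) := by
  classical
  obtain ⟨n₀, hn₀k, hkey⟩ := key_arith k hk α hα0 hα
  refine ⟨n₀, ?_⟩
  intro n hn V _ _ hcard H huni hdeg T hT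
  by_contra hcon
  push_neg at hcon
  set t : ℝ := 6 * (k:ℝ) ^ ((3:ℝ)/2) with htdef
  have hk0 : (0:ℝ) < k := by exact_mod_cast (show 0 < k by omega)
  have ht0 : (0:ℝ) < t := by
    rw [htdef]
    have := Real.rpow_pos_of_pos hk0 ((3:ℝ)/2)
    linarith
  set m : ℕ := ⌈t⌉₊ + 1 with hmdef
  have hmT : m ≤ T.card := by
    have h1 : ⌈t + 1⌉₊ ≤ T.card := Nat.ceil_le.mpr hT
    rwa [Nat.ceil_add_one ht0.le] at h1
  obtain ⟨T', hT'T, hT'card⟩ := Finset.exists_subset_card_eq hmT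
  set A : V → Finset (Finset V) :=
    fun v => Finset.univ.filter (fun S => v ∉ S ∧ H (insert v S)) with hAdef
  have hAcard : ∀ v : V,
      (Nat.card {S : Finset V // v ∉ S ∧ H (insert v S)} : ℝ) = ((A v).card : ℝ) := by
    intro v
    rw [Nat.card_eq_fintype_card, Fintype.card_subtype]
  have hAsub : ∀ v : V, A v ⊆ Finset.univ.powersetCard (k-1) := by
    intro v S hS
    rw [hAdef, Finset.mem_filter] at hS
    obtain ⟨-, hv, hH⟩ := hS
    have hek := huni _ hH
    have hins : (insert v S).card = S.card + 1 := Finset.card_insert_of_notMem hv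
    rw [Finset.mem_powersetCard]
    exact ⟨Finset.subset_univ S, by omega⟩
  have hdeg' : ∀ v : V, (1/t) * (((n-1).choose (k-1) : ℕ) : ℝ) ≤ ((A v).card : ℝ) := by
    intro v
    rw [← hAcard v]
    exact hdeg v
  have hinter : ∀ u ∈ T', ∀ v ∈ T', u ≠ v →
      (((A u ∩ A v).card : ℕ) : ℝ) ≤ α * (n:ℝ)^(k-1) := by
    intro u hu v hv huv
    have h := hcon u (hT'T hu) v (hT'T hv) huv
    have heq : (Nat.card {S : Finset V // u ∉ S ∧ v ∉ S ∧ H (insert u S) ∧ H (insert v S)} : ℝ)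
        = (((A u ∩ A v).card : ℕ) : ℝ) := by
      rw [Nat.card_eq_fintype_card, Fintype.card_subtype]
      congr 2
      ext S
      simp only [hAdef, Finset.mem_inter, Finset.mem_filter, Finset.mem_univ, true_and]
      tauto
    rw [heq] at h
    linarith
  have hbon := bonferroni A T'
  have hsum : (m:ℝ) * ((1/t) * (((n-1).choose (k-1) : ℕ) : ℝ)) ≤ ∑ v ∈ T', ((A v).card : ℝ) := by
    calc (m:ℝ) * ((1/t) * (((n-1).choose (k-1) : ℕ) : ℝ))
        = ∑ _v ∈ T', (1/t) * (((n-1).choose (k-1) : ℕ) : ℝ) := by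
          rw [Finset.sum_const, hT'card, nsmul_eq_mul]
      _ ≤ ∑ v ∈ T', ((A v).card : ℝ) := Finset.sum_le_sum (fun v _ => hdeg' v)
  have hoff : ∑ p ∈ T'.offDiag, ((A p.1 ∩ A p.2).card : ℝ)
      ≤ ((m:ℝ) * (m:ℝ) - (m:ℝ)) * (α * (n:ℝ)^(k-1)) := by
    calc ∑ p ∈ T'.offDiag, ((A p.1 ∩ A p.2).card : ℝ)
        ≤ ∑ _p ∈ T'.offDiag, α * (n:ℝ)^(k-1) := by
          refine Finset.sum_le_sum (fun p hp => ?_)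
          rw [Finset.mem_offDiag] at hp
          exact hinter _ hp.1 _ hp.2.1 hp.2.2
      _ = (T'.offDiag.card : ℝ) * (α * (n:ℝ)^(k-1)) := by
          rw [Finset.sum_const, nsmul_eq_mul]
      _ = ((m:ℝ) * (m:ℝ) - (m:ℝ)) * (α * (n:ℝ)^(k-1)) := by
          rw [Finset.offDiag_card, hT'card]
          congr 1
          have hmm : m ≤ m * m := Nat.le_mul_of_pos_left m (by omega)
          push_cast [Nat.cast_sub hmm]
          ring
  have hunion : ((T'.biUnion A).card : ℝ) ≤ ((n.choose (k-1) : ℕ) : ℝ) := by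
    have h1 : T'.biUnion A ⊆ Finset.univ.powersetCard (k-1) :=
      Finset.biUnion_subset.mpr (fun v _ => hAsub v)
    have h2 := Finset.card_le_card h1
    rw [Finset.card_powersetCard, Finset.card_univ, hcard] at h2
    exact_mod_cast h2
  have hm1 : t + 1 ≤ (m:ℝ) := by
    have := Nat.le_ceil t
    rw [hmdef]
    push_cast
    linarith
  have hm2 : (m:ℝ) ≤ t + 2 := by
    have := Nat.ceil_lt_add_one ht0.le
    rw [hmdef]
    push_cast
    linarith
  have hfinal := hkey n hn m hm1 hm2

  linarith [hbon, hsum, hoff, hunion, hfinal]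
end

section
/- Let D be an oriented graph on n vertices with δ^0(D) ≥ (1/2 - c)n where c < 1/4, and let S^+ be a vertex set with the property that every x ∈ S^+ satisfies d^+(x, A) ≤ γn for a fixed set A with |A| > (1/3 + 50k³δ)n, and |S^+| ≥ (n - |A|)/2 - 51k³δn where the complement of A has size at most (2/3 - 50k³δ)n. If additionally every vertex x ∈ S^+ has d^+(x, V(D)∖(A ∪ S^+)) ≤ n - |A| - |S^+| + 6k^{3/2}δn, then some vertex x ∈ S^+ with d^+(x, S^+) ≤ |S^+|/2 satisfies d^+(x) < (3/4)(2/3 - 50k³δ)n + γn + 32k³δn; in particular, if c, γ, δ are small enough that this bound is below (1/2 - c)n, no such configuration exists, i.e., |A| ≤ (1/3 + 50k³δ)n must hold. -/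
/-- `dOut G v W` is the number of out-neighbours of `v` lying in the set `W`. -/
noncomputable def dOut {V : Type*} (G : V → V → Prop) (v : V) (W : Set V) : ℕ :=
  Nat.card {w : V // w ∈ W ∧ G v w}

open Finset

section
variable {V : Type*} (G : V → V → Prop)

lemma dOut_eq_ncard (v : V) (W : Set V) : dOut G v W = (W ∩ {w | G v w}).ncard :=
  (Nat.card_coe_set_eq _).symm

lemma outDeg_eq_dOut_univ (v : V) : outDeg G v = dOut G v Set.univ :=
  Nat.card_congr (Equiv.subtypeEquivRight fun _ => (and_iff_right trivial).symm)

lemma dOut_union_le (v : V) (W W' : Set V) : dOut G v (W ∪ W') ≤ dOut G v W + dOut G v W' := by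
  simp only [dOut_eq_ncard, Set.union_inter_distrib_right]
  exact Set.ncard_union_le _ _

lemma outDeg_le_dOut_add_dOut_add_dOut_compl (v : V) (W W' : Set V) :
    outDeg G v ≤ dOut G v W + dOut G v W' + dOut G v (W ∪ W')ᶜ := by
  rw [outDeg_eq_dOut_univ, ← Set.union_compl_self (W ∪ W')]
  exact (dOut_union_le G v _ _).trans (Nat.add_le_add_right (dOut_union_le G v W W') _)

lemma dOut_coe_finset [DecidableRel G] (v : V) (s : Finset V) : dOut G v s = #{w ∈ s | G v w} := by
  rw [dOut_eq_ncard, ← Set.ncard_coe_finset, coe_filter]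
  rfl

lemma two_mul_sum_card_filter_le [DecidableRel G] (hG : ∀ u v, G u v → ¬ G v u) (s : Finset V) :
    2 * ∑ x ∈ s, #{y ∈ s | G x y} ≤ #s ^ 2 := calc
  2 * ∑ x ∈ s, #{y ∈ s | G x y}
      = ∑ x ∈ s, (#{y ∈ s | G x y} + #{y ∈ s | G y x}) := by
        rw [two_mul, sum_add_distrib]
        congr 1
        exact sum_card_bipartiteAbove_eq_sum_card_bipartiteBelow G
    _ = ∑ x ∈ s, #{y ∈ s | G x y ∨ G y x} := by
        refine sum_congr rfl fun x _ => ?_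
        classical
        rw [filter_or, card_union_of_disjoint]
        exact disjoint_filter.2 fun y _ h => hG x y h
    _ ≤ ∑ _x ∈ s, #s := sum_le_sum fun x _ => card_filter_le _ _
    _ = #s ^ 2 := by rw [sum_const, smul_eq_mul, sq]

lemma exists_two_mul_dOut_le_ncard [Finite V] (hG : ∀ u v, G u v → ¬ G v u) {S : Set V}
    (hS : S.Nonempty) : ∃ x ∈ S, 2 * dOut G x S ≤ S.ncard := by
  classical
  have := Fintype.ofFinite V
  have hsum : ∑ x ∈ S.toFinset, 2 * #{y ∈ S.toFinset | G x y} ≤ ∑ _x ∈ S.toFinset, #S.toFinset := by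
    rw [← mul_sum, sum_const, smul_eq_mul, ← sq]
    exact two_mul_sum_card_filter_le G hG _
  obtain ⟨x, hx, hle⟩ := exists_le_of_sum_le (Set.toFinset_nonempty.2 hS) hsum
  refine ⟨x, Set.mem_toFinset.1 hx, ?_⟩
  rwa [← Set.ncard_eq_toFinset_card', ← dOut_coe_finset, Set.coe_toFinset] at hle
end

lemma natCast_rpow_le_pow {k m : ℕ} {y : ℝ} (hy : 0 < y) (hym : y ≤ m) :
    (k : ℝ) ^ y ≤ (k : ℝ) ^ m := by
  rcases k.eq_zero_or_pos with rfl | hk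
  · rw [Nat.cast_zero, Real.zero_rpow hy.ne']
    positivity
  · rw [← Real.rpow_natCast]
    exact Real.rpow_le_rpow_of_exponent_le (by exact_mod_cast hk) hym

theorem stmt19_general {V : Type*} [Fintype V] (G : V → V → Prop)
    (horiented : ∀ u v, G u v → ¬ G v u)
    (k n : ℕ) (c γ δ : ℝ) (hδ : 0 ≤ δ)
    (hdeg : ∀ v : V, ((1:ℝ)/2 - c) * n ≤ (outDeg G v : ℝ) ∧
                     ((1:ℝ)/2 - c) * n ≤ (inDeg G v : ℝ))
    (A Sp : Set V) (hne : Sp.Nonempty)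
    (hAout : ∀ x ∈ Sp, (dOut G x A : ℝ) ≤ γ * n)
    (hSsize : ((n : ℝ) - (A.ncard : ℝ))/2 - 51*(k:ℝ)^3*δ*n ≤ (Sp.ncard : ℝ))
    (hrest : ∀ x ∈ Sp, (dOut G x ((A ∪ Sp)ᶜ) : ℝ) ≤
      (n : ℝ) - (A.ncard : ℝ) - (Sp.ncard : ℝ) + 6*(k:ℝ)^((3:ℝ)/2)*δ*n)
    (hsmall : (3/4)*((2:ℝ)/3 - 50*(k:ℝ)^3*δ)*n + γ*n + 32*(k:ℝ)^3*δ*n < ((1:ℝ)/2 - c)*n) :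
    (A.ncard : ℝ) ≤ ((1:ℝ)/3 + 50*(k:ℝ)^3*δ) * n := by
  by_contra! hA
  obtain ⟨x, hx, hxSp⟩ := exists_two_mul_dOut_le_ncard G horiented hne
  have hsplit : (outDeg G x : ℝ) ≤ dOut G x A + dOut G x Sp + dOut G x (A ∪ Sp)ᶜ := by
    exact_mod_cast outDeg_le_dOut_add_dOut_add_dOut_compl G x A Sp
  have hhalf : 2 * (dOut G x Sp : ℝ) ≤ Sp.ncard := by exact_mod_cast hxSp
  have hδn : 0 ≤ (k : ℝ) ^ 3 * δ * n := by positivity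
  have hpow : (k : ℝ) ^ ((3 : ℝ) / 2) * δ * n ≤ (k : ℝ) ^ 3 * δ * n := by
    have := natCast_rpow_le_pow (k := k) (m := 3) (y := 3 / 2) (by norm_num) (by norm_num)
    gcongr
  linarith [hAout x hx, hrest x hx, (hdeg x).1]

/-- Lemma 3.13(ii)-type statement: let `D` be an oriented graph on `n`
vertices with minimum semi-degree at least `(1/2 - c)n`, and let `S⁺` be a nonempty set
disjoint from `A` such that every `x ∈ S⁺` has `d⁺(x, A) ≤ γn`,
`|S⁺| ≥ (n - |A|)/2 - 51k³δn`, and every `x ∈ S⁺` has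
`d⁺(x, V∖(A ∪ S⁺)) ≤ n - |A| - |S⁺| + 6k^{3/2}δn`.  If moreover
`(3/4)(2/3 - 50k³δ)n + γn + 32k³δn < (1/2 - c)n`, then such a configuration with
`|A| > (1/3 + 50k³δ)n` is impossible, i.e. `|A| ≤ (1/3 + 50k³δ)n` must hold. -/
theorem stmt19 {V : Type*} [Fintype V] (G : V → V → Prop)
    (horiented : ∀ u v, G u v → ¬ G v u)
    (k n : ℕ) (c γ δ : ℝ) (hn : Fintype.card V = n)
    (hc : c < 1/4) (hγ : 0 ≤ γ) (hδ : 0 ≤ δ)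
    (hdeg : ∀ v : V, ((1:ℝ)/2 - c) * n ≤ (outDeg G v : ℝ) ∧
                     ((1:ℝ)/2 - c) * n ≤ (inDeg G v : ℝ))
    (A Sp : Set V) (hdisj : Disjoint A Sp) (hne : Sp.Nonempty)
    (hAout : ∀ x ∈ Sp, (dOut G x A : ℝ) ≤ γ * n)
    (hSsize : ((n : ℝ) - (A.ncard : ℝ))/2 - 51*(k:ℝ)^3*δ*n ≤ (Sp.ncard : ℝ))
    (hrest : ∀ x ∈ Sp, (dOut G x ((A ∪ Sp)ᶜ) : ℝ) ≤
      (n : ℝ) - (A.ncard : ℝ) - (Sp.ncard : ℝ) + 6*(k:ℝ)^((3:ℝ)/2)*δ*n)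
    (hsmall : (3/4)*((2:ℝ)/3 - 50*(k:ℝ)^3*δ)*n + γ*n + 32*(k:ℝ)^3*δ*n < ((1:ℝ)/2 - c)*n) :
    (A.ncard : ℝ) ≤ ((1:ℝ)/3 + 50*(k:ℝ)^3*δ) * n :=
  stmt19_general G horiented k n c γ δ hδ hdeg A Sp hne hAout hSsize hrest hsmall
end
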